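/- arXiv:0807.3278 — 5 statements merged into one kernel-verified Lean document; each statement's English description precedes it below -/
import Mathlib

section
/- Let X be a compact metric space and let e^t and u^t be commuting flows on X. Assume each e^t is an isometry of X, and that for every x ∈ X there exists y ∈ X such that u^t x → y as t → +∞ and as t → −∞. Then the composed flow (eu)^t = e^t ∘ u^t is chain recurrent, i.e., every point of X is chain recurrent for it. -/
/-!
Pick `T ≥ t₀` with `u^T x` and `u^{-T} x` both close to the common limit of the `u`-orbit of `x`.
From a point `a`, flow for time `T` to `e^T u^T a`, jump to `e^T u^{-T} a`, and flow for time `T`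
again: this lands exactly on `g a`, where `g = e^T ∘ e^T`. The jump has size
`dist (u^T a) (u^{-T} a)`, which is the same for every `a = g^m x` because `g` is an isometry
commuting with `u`. So the `g`-orbit of `x` is traversed by `ε`-chains, and it returns `ε`-close
to `x` because an isometry of a compact space is recurrent; the last jump then lands on `x`.
-/

open Filter Topology

/-- An `(ε, t₀)`-chain from `x` to `y` for the flow `φ`: a finite sequence of points
starting at `x` and ending at `y`, together with times `≥ t₀`, each jump of size `< ε`. -/
def IsEpsTChain {X : Type*} [MetricSpace X] {𝕋 : Type*}
    (φ : 𝕋 → X → X) (ε : ℝ) (t₀ : 𝕋) [LE 𝕋] (x y : X) : Prop :=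
  ∃ n : ℕ, ∃ xs : Fin (n + 2) → X, ∃ ts : Fin (n + 1) → 𝕋,
    xs 0 = x ∧ xs (Fin.last (n + 1)) = y ∧
    ∀ i : Fin (n + 1), t₀ ≤ ts i ∧ dist (φ (ts i) (xs i.castSucc)) (xs i.succ) < ε

section Chains

variable {X : Type*} [MetricSpace X] {𝕋 : Type*} [LE 𝕋]

def IsEpsTStep (φ : 𝕋 → X → X) (ε : ℝ) (t₀ : 𝕋) (x y : X) : Prop :=
  ∃ t, t₀ ≤ t ∧ dist (φ t x) y < ε

variable {φ : 𝕋 → X → X} {ε : ℝ} {t₀ : 𝕋}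

theorem IsEpsTChain.of_isEpsTStep {x y : X} (h : IsEpsTStep φ ε t₀ x y) :
    IsEpsTChain φ ε t₀ x y := by
  obtain ⟨t, ht, hd⟩ := h
  exact ⟨0, ![x, y], fun _ => t, rfl, rfl, fun i => by fin_cases i; exact ⟨ht, hd⟩⟩

theorem IsEpsTChain.cons {x y z : X} (hxy : IsEpsTStep φ ε t₀ x y)
    (hyz : IsEpsTChain φ ε t₀ y z) : IsEpsTChain φ ε t₀ x z := by
  obtain ⟨t, ht, hd⟩ := hxy
  obtain ⟨n, xs, ts, h0, hlast, hstep⟩ := hyz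
  refine ⟨n + 1, Fin.cons x xs, Fin.cons t ts, rfl, by simpa using hlast, fun i => ?_⟩
  cases i using Fin.cases with
  | zero => simpa [h0] using ⟨ht, hd⟩
  | succ j => simpa [← Fin.succ_castSucc] using hstep j

theorem IsEpsTChain.of_transGen {x y : X} (h : Relation.TransGen (IsEpsTStep φ ε t₀) x y) :
    IsEpsTChain φ ε t₀ x y := by
  induction h using Relation.TransGen.head_induction_on with
  | single h => exact .of_isEpsTStep h
  | head hstep _ hchain => exact hchain.cons hstep

theorem IsEpsTChain.refl_of_iterate {x : X} {T : 𝕋} (hT : t₀ ≤ T) (hε : 0 < ε) {g b : X → X}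
    (hjump : ∀ m, dist (φ T (g^[m] x)) (b (g^[m] x)) < ε) (hflow : ∀ a, φ T (b a) = g a)
    {n : ℕ} (hn : dist (g^[n + 1] x) x < ε) : IsEpsTChain φ ε t₀ x x := by
  have hreach : ∀ m, Relation.ReflTransGen (IsEpsTStep φ ε t₀) x (g^[m] x) := by
    intro m
    induction m with
    | zero => rfl
    | succ m ih =>
      refine (ih.tail ⟨T, hT, hjump m⟩).tail ⟨T, hT, ?_⟩
      rwa [hflow, ← Function.iterate_succ_apply' g, dist_self]
  refine .of_transGen ((Relation.TransGen.tail' (hreach n) ⟨T, hT, hjump n⟩).tail ⟨T, hT, ?_⟩)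
  rwa [hflow, ← Function.iterate_succ_apply' g]

end Chains

theorem Isometry.dist_iterate {X : Type*} [PseudoMetricSpace X] {g : X → X} (hg : Isometry g)
    (n : ℕ) (x y : X) : dist (g^[n] x) (g^[n] y) = dist x y := by
  induction n with
  | zero => rfl
  | succ n ih => rw [Function.iterate_succ_apply', Function.iterate_succ_apply', hg.dist_eq, ih]

theorem Isometry.exists_dist_iterate_succ_lt {X : Type*} [MetricSpace X] [CompactSpace X]
    {g : X → X} (hg : Isometry g) (x : X) {ε : ℝ} (hε : 0 < ε) :
    ∃ n, dist (g^[n + 1] x) x < ε := by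
  obtain ⟨p, -, φ, hφ, hlim⟩ :=
    isCompact_univ.tendsto_subseq (x := fun n => g^[n] x) fun _ => Set.mem_univ _
  obtain ⟨N, hN⟩ := Metric.cauchySeq_iff.mp hlim.cauchySeq ε hε
  obtain ⟨n, hn⟩ : ∃ n, φ (N + 1) = φ N + (n + 1) := Nat.exists_eq_add_of_lt (hφ N.lt_succ_self)
  refine ⟨n, ?_⟩
  have := hN (N + 1) N.le_succ N le_rfl
  rwa [Function.comp_apply, Function.comp_apply, hn, Function.iterate_add_apply,
    hg.dist_iterate] at this

theorem exists_ge_dist_lt_of_tendsto_atTop_atBot {X : Type*} [PseudoMetricSpace X]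
    {𝕋 : Type*} [AddCommGroup 𝕋] [LinearOrder 𝕋] [IsOrderedAddMonoid 𝕋] {f : 𝕋 → X} {y : X}
    (htop : Tendsto f atTop (𝓝 y)) (hbot : Tendsto f atBot (𝓝 y)) (t₀ : 𝕋) {ε : ℝ}
    (hε : 0 < ε) : ∃ T, t₀ ≤ T ∧ dist (f T) (f (-T)) < ε := by
  have hball := Metric.ball_mem_nhds y (half_pos hε)
  obtain ⟨T, hT, hTtop, hTbot⟩ := ((eventually_ge_atTop t₀).and <|
    (htop.eventually_mem hball).and
      (tendsto_neg_atTop_atBot.eventually (hbot.eventually_mem hball))).exists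
  exact ⟨T, hT, (dist_triangle_right _ _ y).trans_lt (add_halves ε ▸ add_lt_add hTtop hTbot)⟩

theorem composed_flow_chain_recurrent_general {X : Type*} [MetricSpace X] [CompactSpace X]
    {𝕋 : Type*} [AddCommGroup 𝕋] [LinearOrder 𝕋] [IsOrderedAddMonoid 𝕋]
    (e u : 𝕋 → X → X)
    (hu0 : u 0 = id) (huadd : ∀ s t : 𝕋, u (s + t) = u s ∘ u t)
    (hcomm : ∀ s t : 𝕋, e s ∘ u t = u t ∘ e s)
    (hiso : ∀ t : 𝕋, Isometry (e t))
    (hlim : ∀ x : X, ∃ y : X,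
      Tendsto (fun t : 𝕋 => u t x) atTop (𝓝 y) ∧
      Tendsto (fun t : 𝕋 => u t x) atBot (𝓝 y)) :
    ∀ (x : X) (ε : ℝ) (t₀ : 𝕋), 0 < ε → 0 < t₀ →
      IsEpsTChain (fun t => e t ∘ u t) ε t₀ x x := by
  rintro x ε t₀ hε -
  obtain ⟨y, htop, hbot⟩ := hlim x
  obtain ⟨T, hT, hxT⟩ := exists_ge_dist_lt_of_tendsto_atTop_atBot htop hbot t₀ hε
  have hinv : Function.LeftInverse (u T) (u (-T)) := fun z => by
    rw [← Function.comp_apply (f := u T), ← huadd, add_neg_cancel, hu0, id]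
  have heu : ∀ s t, Function.Commute (e s) (u t) := fun s t => congrFun (hcomm s t)
  have hg : Isometry (e T ∘ e T) := (hiso T).comp (hiso T)
  have hgu : ∀ t, Function.Commute (e T ∘ e T) (u t) := fun t => (heu T t).comp_left (heu T t)
  obtain ⟨n, hn⟩ := hg.exists_dist_iterate_succ_lt x hε
  refine .refl_of_iterate hT hε (b := e T ∘ u (-T)) (fun m => ?_) (fun a => ?_) hn
  · rw [Function.comp_apply, Function.comp_apply, (hiso T).dist_eq,
      ← (hgu T).iterate_left m x, ← (hgu (-T)).iterate_left m x, hg.dist_iterate]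
    exact hxT
  · simp only [Function.comp_apply]
    rw [← heu T T, hinv]

/-- If `e` and `u` are commuting flows on a compact metric space, every
`e^t` is an isometry, and for every `x` the forward and backward `u`-orbits of `x` converge
to a common point, then the composed flow `(eu)^t = e^t ∘ u^t` is chain recurrent: every
point admits an `(ε, t₀)`-chain from itself to itself, for all `ε > 0`, `t₀ > 0`. -/
theorem composed_flow_chain_recurrent {X : Type*} [MetricSpace X] [CompactSpace X]
    {𝕋 : Type*} [AddCommGroup 𝕋] [LinearOrder 𝕋] [IsOrderedAddMonoid 𝕋]
    (e u : 𝕋 → X → X)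
    (he0 : e 0 = id) (headd : ∀ s t : 𝕋, e (s + t) = e s ∘ e t)
    (hu0 : u 0 = id) (huadd : ∀ s t : 𝕋, u (s + t) = u s ∘ u t)
    (hcomm : ∀ s t : 𝕋, e s ∘ u t = u t ∘ e s)
    (hiso : ∀ t : 𝕋, Isometry (e t))
    (hlim : ∀ x : X, ∃ y : X,
      Tendsto (fun t : 𝕋 => u t x) atTop (𝓝 y) ∧
      Tendsto (fun t : 𝕋 => u t x) atBot (𝓝 y)) :
    ∀ (x : X) (ε : ℝ) (t₀ : 𝕋), 0 < ε → 0 < t₀ →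
      IsEpsTChain (fun t => e t ∘ u t) ε t₀ x x :=
  composed_flow_chain_recurrent_general e u hu0 huadd hcomm hiso hlim
end

section
/- Let V be a finite-dimensional normed real vector space, V = U ⊕ W a direct sum, and x_n = u_n + w_n a sequence with u_n ∈ U, u_n ≠ 0, w_n ∈ W, and w_n/‖u_n‖ → 0. If the lines [x_n] converge in the projective space ℙ(V) to a line [x], then [x] lies in ℙ(U), i.e., x ∈ U. -/
open Filter Topology LinearAlgebra.Projectivization

instance projectivizationTopology {K V : Type*} [DivisionRing K] [AddCommGroup V]
    [Module K V] [TopologicalSpace V] : TopologicalSpace (ℙ K V) :=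
  instTopologicalSpaceQuotient

/-!
Let `π` be the projection onto `W` along `U`. The ratio `‖π v‖ / ‖v‖` is invariant under scaling,
hence a continuous function on `ℙ(V)`. At `[x_n]` it equals `‖w_n‖ / ‖u_n + w_n‖`, which tends to
`0` because `w_n` is negligible against `u_n`; by continuity it vanishes at `[x]`, so
`x ∈ ker π = U`.
-/

namespace Projectivization

variable {𝕜 V E : Type*} [NormedField 𝕜] [NormedAddCommGroup V] [NormedSpace 𝕜 V]
  [NormedAddCommGroup E] [NormedSpace 𝕜 E]

noncomputable def normRatio (f : V →L[𝕜] E) : ℙ 𝕜 V → ℝ :=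
  Projectivization.lift (fun v => ‖f v‖ / ‖(v : V)‖) fun a b t hab => by
    have ht : ‖t‖ ≠ 0 := by
      rintro ht
      exact a.2 (by simpa [norm_eq_zero.mp ht] using hab)
    simp only [hab, map_smul, norm_smul, mul_div_mul_left _ _ ht]

@[simp]
lemma normRatio_mk (f : V →L[𝕜] E) (v : V) (hv : v ≠ 0) :
    normRatio f (mk 𝕜 v hv) = ‖f v‖ / ‖v‖ :=
  rfl

lemma continuous_normRatio (f : V →L[𝕜] E) : Continuous (normRatio f) :=
  ((map_continuous f).comp continuous_subtype_val).norm.div continuous_subtype_val.norm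
    (fun v => norm_ne_zero_iff.mpr v.2) |>.quotient_lift _

lemma map_eq_zero_of_tendsto_mk {ι : Type*} {l : Filter ι} [l.NeBot] (f : V →L[𝕜] E)
    {x : ι → V} (hx : ∀ i, x i ≠ 0) {y : V} (hy : y ≠ 0)
    (hconv : Tendsto (fun i => mk 𝕜 (x i) (hx i)) l (𝓝 (mk 𝕜 y hy)))
    (hf : Tendsto (fun i => ‖f (x i)‖ / ‖x i‖) l (𝓝 0)) :
    f y = 0 := by
  have hlim : ‖f y‖ / ‖y‖ = 0 :=
    tendsto_nhds_unique (((continuous_normRatio f).tendsto _).comp hconv) hf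
  simpa [hy] using hlim

end Projectivization

lemma tendsto_norm_div_norm_add_of_tendsto_inv_norm_smul {V ι : Type*} [NormedAddCommGroup V]
    [NormedSpace ℝ V] {l : Filter ι} {u w : ι → V} (hu : ∀ i, u i ≠ 0)
    (hw : Tendsto (fun i => ‖u i‖⁻¹ • w i) l (𝓝 0)) :
    Tendsto (fun i => ‖w i‖ / ‖u i + w i‖) l (𝓝 0) := by
  set a := fun i => ‖u i‖⁻¹ • u i
  set b := fun i => ‖u i‖⁻¹ • w i
  have ha : ∀ i, ‖a i‖ = 1 := fun i => norm_smul_inv_norm (hu i)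
  have hab : Tendsto (fun i => ‖a i + b i‖) l (𝓝 1) := by
    have hsub : Tendsto (fun i => ‖a i + b i‖ - ‖a i‖) l (𝓝 0) :=
      squeeze_zero_norm (fun i => by simpa using abs_norm_sub_norm_le (a i + b i) (a i))
        (by simpa using hw.norm)
    simpa [ha] using hsub.add_const 1
  have hscale : ∀ i, ‖b i‖ / ‖a i + b i‖ = ‖w i‖ / ‖u i + w i‖ := fun i => by
    have hu' : ‖u i‖⁻¹ ≠ 0 := inv_ne_zero (norm_ne_zero_iff.mpr (hu i))
    simp only [a, b, ← smul_add, norm_smul, norm_inv, norm_norm, mul_div_mul_left _ _ hu']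
  simpa only [norm_zero, zero_div] using (hw.norm.div hab one_ne_zero).congr hscale

/-- Let `V = U ⊕ W` be a direct sum decomposition of a finite-dimensional
normed real vector space and `x_n = u_n + w_n` with `u_n ∈ U` nonzero, `w_n ∈ W`, and
`w_n / ‖u_n‖ → 0`.  If the lines `[x_n]` converge in `ℙ(V)` to a line `[x]`, then
`x ∈ U`. -/
theorem lim_line_mem_of_dominant {V : Type*} [NormedAddCommGroup V] [NormedSpace ℝ V]
    [FiniteDimensional ℝ V] (U W : Submodule ℝ V) (hUW : IsCompl U W)
    (u w : ℕ → V) (hu : ∀ n, u n ∈ U) (hw : ∀ n, w n ∈ W) (hu0 : ∀ n, u n ≠ 0)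
    (hquot : Tendsto (fun n => (‖u n‖)⁻¹ • w n) atTop (𝓝 0))
    (hx : ∀ n, u n + w n ≠ 0) (x : V) (hx0 : x ≠ 0)
    (hconv : Tendsto (fun n => Projectivization.mk ℝ (u n + w n) (hx n)) atTop
      (𝓝 (Projectivization.mk ℝ x hx0))) :
    x ∈ U := by
  set π : V →L[ℝ] V := LinearMap.toContinuousLinearMap (W.projection U hUW.symm)
  have hπ : ∀ n, π (u n + w n) = w n := fun n => by
    simp [π, Submodule.projection_apply_of_mem_right _ (hu n),
      Submodule.projection_apply_of_mem_left _ (hw n)]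
  have hπx : π x = 0 := Projectivization.map_eq_zero_of_tendsto_mk π hx hx0 hconv <| by
    simpa only [hπ] using tendsto_norm_div_norm_add_of_tendsto_inv_norm_smul hu0 hquot
  exact (Submodule.projection_apply_eq_zero_iff hUW.symm).mp hπx
end

section
/- Let V be a finite-dimensional normed real vector space and let g ∈ GL(V) have trivial hyperbolic Jordan component (equivalently, all complex eigenvalues of g have modulus 1). Then for every x ≠ 0 there exists ε > 0 such that ‖g^t x‖ > ε for all t ∈ ℤ. -/
/-!
Complexify. The cyclic subspace of `ℂ[X]`-translates of `1 ⊗ x` contains an eigenvector of the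
complexified `g`, so some polynomial `P` in `g` sends `1 ⊗ x` to an eigenvector `w`, with
eigenvalue `μ` of modulus one. Since `P` commutes with `g`, it sends `1 ⊗ gᵗ x` to `μᵗ w`, whose
image under a functional not vanishing at `w` has constant modulus; the orbit is then bounded
below because that composite is a continuous real-linear map `V → ℂ`.
-/

open Polynomial
open scoped TensorProduct

theorem Function.Semiconj.linearEquiv_zpow {R S M N : Type*} [Semiring R] [Semiring S]
    [AddCommMonoid M] [AddCommMonoid N] [Module R M] [Module S N]
    {g : M ≃ₗ[R] M} {G : N ≃ₗ[S] N} {Ψ : M → N} (h : Function.Semiconj Ψ g G) (t : ℤ) :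
    Function.Semiconj Ψ ⇑(g ^ t) ⇑(G ^ t) := by
  obtain ⟨n, rfl | rfl⟩ := Int.eq_nat_or_neg t
  · simpa only [zpow_natCast, LinearEquiv.coe_pow] using h.iterate_right n
  · have hn : Function.Semiconj Ψ ⇑(g ^ n) ⇑(G ^ n) := by
      simpa only [LinearEquiv.coe_pow] using h.iterate_right n
    simpa only [zpow_neg, zpow_natCast, LinearEquiv.coe_inv] using
      hn.inverses_right (g ^ n).apply_symm_apply (G ^ n).symm_apply_apply

theorem LinearEquiv.zpow_apply_of_apply_eq_smul {K E : Type*} [Field K] [AddCommGroup E]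
    [Module K E] {G : E ≃ₗ[K] E} {μ : K} {w : E} (hμ : μ ≠ 0) (hw : G w = μ • w) (t : ℤ) :
    (G ^ t) w = μ ^ t • w := by
  have hinv : G⁻¹ w = μ⁻¹ • w := by
    rw [LinearEquiv.coe_inv, LinearEquiv.symm_apply_eq, map_smul, hw, inv_smul_smul₀ hμ]
  induction t using Int.induction_on with
  | zero => simp
  | succ n ih => rw [zpow_add_one, LinearEquiv.mul_apply, hw, map_smul, ih, smul_smul,
      zpow_add_one₀ hμ, mul_comm]
  | pred n ih => rw [zpow_sub_one, LinearEquiv.mul_apply, hinv, map_smul, ih, smul_smul,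
      zpow_sub_one₀ hμ, mul_comm]

theorem Module.End.exists_hasEigenvector_aeval_apply {K E : Type*} [Field K] [IsAlgClosed K]
    [AddCommGroup E] [Module K E] [FiniteDimensional K E] (f : Module.End K E) {v : E}
    (hv : v ≠ 0) : ∃ (p : K[X]) (μ : K), f.HasEigenvector μ (aeval f p v) := by
  let W : Submodule K E := LinearMap.range (LinearMap.applyₗ v ∘ₗ (aeval f).toLinearMap)
  have hW : ∀ w ∈ W, f w ∈ W := by
    rintro _ ⟨p, rfl⟩
    exact ⟨X * p, by simp⟩
  have : Nontrivial W := Submodule.nontrivial_iff_ne_bot.2 <|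
    (Submodule.ne_bot_iff W).2 ⟨v, ⟨1, by simp⟩, hv⟩
  obtain ⟨μ, hμ⟩ := Module.End.exists_eigenvalue (f.restrict hW)
  obtain ⟨⟨_, p, rfl⟩, hw⟩ := hμ.exists_hasEigenvector
  refine ⟨p, μ, ?_, ?_⟩
  · exact f.eigenspace_restrict_le_eigenspace hW μ ⟨_, hw.1, rfl⟩
  · simpa using hw.2

theorem exists_pos_lt_norm_of_le_norm_apply {𝕜 E F ι : Type*} [NontriviallyNormedField 𝕜]
    [SeminormedAddCommGroup E] [SeminormedAddCommGroup F] [NormedSpace 𝕜 E] [NormedSpace 𝕜 F]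
    (Φ : E →L[𝕜] F) {y : ι → E} {c : ℝ} (hc : 0 < c) (hy : ∀ i, c ≤ ‖Φ (y i)‖) :
    ∃ ε > 0, ∀ i, ε < ‖y i‖ := by
  obtain ⟨C, hC, hΦ⟩ := Φ.bound
  refine ⟨c / (2 * C), by positivity, fun i => ?_⟩
  rw [div_lt_iff₀ (by positivity)]
  nlinarith [hy i, hΦ (y i), norm_nonneg (y i)]

/-- Let `V` be a finite-dimensional normed real vector space and
`g ∈ GL(V)` with trivial hyperbolic Jordan component, i.e. all complex eigenvalues of `g`
have modulus `1`.  Then for every `x ≠ 0` there is `ε > 0` with `‖g^t x‖ > ε` for all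
`t ∈ ℤ`. -/
theorem norm_orbit_bounded_below_of_modulus_one
    {V : Type*} [NormedAddCommGroup V] [NormedSpace ℝ V] [FiniteDimensional ℝ V]
    (g : V ≃ₗ[ℝ] V)
    (hspec : ∀ μ ∈ spectrum ℂ (LinearMap.baseChange ℂ (g : V →ₗ[ℝ] V)), ‖μ‖ = 1)
    (x : V) (hx : x ≠ 0) :
    ∃ ε > 0, ∀ t : ℤ, ε < ‖(g ^ t) x‖ := by
  let f : Module.End ℂ (ℂ ⊗[ℝ] V) := LinearMap.baseChange ℂ (g : V →ₗ[ℝ] V)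
  let ι : V →ₗ[ℝ] ℂ ⊗[ℝ] V := TensorProduct.mk ℝ ℂ V 1
  obtain ⟨p, μ, hw⟩ := f.exists_hasEigenvector_aeval_apply (v := ι x) (by simpa [ι] using hx)
  set P := aeval f p
  have hμ : ‖μ‖ = 1 := hspec μ (Module.End.hasEigenvalue_of_hasEigenvector hw).mem_spectrum
  have hsemiconj : Function.Semiconj (P ∘ ι) g (g.baseChange ℝ ℂ V V) := fun v => by
    have h := LinearMap.congr_fun ((Commute.all p X).map (aeval f)).eq (ι v)
    simp only [Module.End.mul_apply, aeval_X] at h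
    exact h
  have horbit (t : ℤ) : P (ι ((g ^ t) x)) = μ ^ t • P (ι x) :=
    (hsemiconj.linearEquiv_zpow t x).trans <| LinearEquiv.zpow_apply_of_apply_eq_smul
      (ne_zero_of_norm_ne_zero (hμ ▸ one_ne_zero)) hw.apply_eq_smul t
  obtain ⟨ψ, hψ⟩ := Module.Projective.exists_dual_ne_zero ℂ hw.2
  let Φ : V →ₗ[ℝ] ℂ := (ψ ∘ₗ P).restrictScalars ℝ ∘ₗ ι
  refine exists_pos_lt_norm_of_le_norm_apply (LinearMap.toContinuousLinearMap Φ)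
    (norm_pos_iff.2 hψ) fun t => ?_
  simp [Φ, horbit, norm_zpow, hμ]
end

section
/- Let V be a finite-dimensional real vector space, N: V → V a nilpotent linear map, and x ≠ 0. Let k be the largest integer with v := N^k x ≠ 0 (so N^{k+1} x = 0). Then in projective space, e^{tN}[x] → [v] as t → +∞ and as t → −∞, and moreover e^{tN} v = v for all t. -/
/-!
Since `N ^ (k + 1) x = 0`, the curve `e^{tN} x = ∑_{j ≤ k} (t^j / j!) N^j x` is a vector polynomial
in `t` of degree `k`. Rescaling by `t⁻ᵏ`, which does not change the projective point, gives a
polynomial in `s = t⁻¹` whose value at `s = 0` is `N^k x / k!`; so as `|t| → ∞` the rescaled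
curve tends to a nonzero multiple of `N^k x`, in both directions at once.
-/

open Filter Topology LinearAlgebra.Projectivization

open Bornology
open scoped Nat

namespace Projectivization

variable {K V α : Type*} [DivisionRing K] [AddCommGroup V] [Module K V] [TopologicalSpace V]

theorem tendsto_mk_of_tendsto_smul {l : Filter α} {f : α → V} (hf : ∀ a, f a ≠ 0) {c : α → K}
    (hc : ∀ᶠ a in l, c a ≠ 0) {v : V} (hv : v ≠ 0) (h : Tendsto (fun a => c a • f a) l (𝓝 v)) :
    Tendsto (fun a => mk K (f a) (hf a)) l (𝓝 (mk K v hv)) := by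
  intro U hU
  rw [mem_map]
  obtain ⟨W, hW, hWU⟩ := (mem_nhds_subtype _ ⟨v, hv⟩ _).1 (continuous_quotient_mk'.continuousAt hU)
  filter_upwards [mem_map.1 (h hW), hc] with a haW hca
  have hmk : mk K (f a) (hf a) = mk K (c a • f a) (smul_ne_zero hca (hf a)) :=
    (mk_eq_mk_iff' K _ _ _ _).2 ⟨(c a)⁻¹, inv_smul_smul₀ hca _⟩
  rw [Set.mem_preimage, hmk]
  exact hWU haW

end Projectivization

section ExpSmulApply

variable {𝕂 V : Type*} [RCLike 𝕂] [NormedAddCommGroup V] [NormedSpace 𝕂 V] [CompleteSpace V]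

theorem exp_smul_apply_eq_sum (N : V →L[𝕂] V) (t : 𝕂) {y : V} {m : ℕ} (hm : (N ^ m) y = 0) :
    NormedSpace.exp (t • N) y = ∑ n ∈ Finset.range m, (t ^ n / n !) • (N ^ n) y := by
  have hvanish : ∀ n, m ≤ n → (N ^ n) y = 0 := fun n hn => by
    rw [← Nat.sub_add_cancel hn, pow_add]
    exact (congrArg (N ^ (n - m)) hm).trans (map_zero _)
  have happly := (ContinuousLinearMap.apply 𝕂 V y).map_tsum
    (NormedSpace.expSeries_summable' (𝕂 := 𝕂) (t • N))
  rw [NormedSpace.exp_eq_tsum 𝕂]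
  simp only [ContinuousLinearMap.apply_apply] at happly
  rw [happly, tsum_eq_sum (s := Finset.range m)]
  · refine Finset.sum_congr rfl fun n _ => ?_
    simp [smul_pow, smul_smul, div_eq_inv_mul]
  · intro n hn
    simp [smul_pow, hvanish n (by simpa using hn)]

theorem exp_smul_apply_of_apply_eq_zero (N : V →L[𝕂] V) (t : 𝕂) {y : V} (hy : N y = 0) :
    NormedSpace.exp (t • N) y = y := by
  simpa using exp_smul_apply_eq_sum N t (m := 1) (by simpa using hy)

theorem tendsto_inv_pow_smul_exp_smul_apply_cobounded (N : V →L[𝕂] V) {x : V} {k : ℕ}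
    (hk1 : (N ^ (k + 1)) x = 0) :
    Tendsto (fun t : 𝕂 => t⁻¹ ^ k • NormedSpace.exp (t • N) x) (cobounded 𝕂)
      (𝓝 ((k ! : 𝕂)⁻¹ • (N ^ k) x)) := by
  set F : 𝕂 → V := fun s => ∑ j ∈ Finset.range (k + 1), (s ^ (k - j) / j !) • (N ^ j) x
  have hF : ∀ t ≠ 0, t⁻¹ ^ k • NormedSpace.exp (t • N) x = F t⁻¹ := fun t ht => by
    rw [exp_smul_apply_eq_sum N t hk1, Finset.smul_sum]
    refine Finset.sum_congr rfl fun j hj => ?_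
    rw [smul_smul, inv_pow, inv_pow, pow_sub₀ _ ht (Finset.mem_range_succ_iff.1 hj)]
    field_simp
  have hF0 : F 0 = (k ! : 𝕂)⁻¹ • (N ^ k) x := by
    simp only [F]
    rw [Finset.sum_eq_single_of_mem k (Finset.self_mem_range_succ k)]
    · simp
    · intro j hj hjk
      simp [zero_pow (Nat.sub_ne_zero_of_lt (lt_of_le_of_ne (Finset.mem_range_succ_iff.1 hj) hjk))]
  have hFcont : Continuous F := by fun_prop
  rw [← hF0]
  refine ((hFcont.tendsto 0).comp tendsto_inv₀_cobounded).congr' ?_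
  filter_upwards [eventually_ne_cobounded 0] with t ht
  exact (hF t ht).symm

theorem tendsto_mk_exp_smul_apply_cobounded (N : V →L[𝕂] V) {x : V} {k : ℕ}
    (hk1 : (N ^ (k + 1)) x = 0) (hk : (N ^ k) x ≠ 0)
    (hexp : ∀ t : 𝕂, NormedSpace.exp (t • N) x ≠ 0) :
    Tendsto (fun t : 𝕂 => Projectivization.mk 𝕂 (NormedSpace.exp (t • N) x) (hexp t))
      (cobounded 𝕂) (𝓝 (Projectivization.mk 𝕂 ((N ^ k) x) hk)) := by
  have hfact : (k ! : 𝕂) ≠ 0 := by exact_mod_cast k.factorial_ne_zero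
  have hc : ∀ᶠ t in cobounded 𝕂, (k ! : 𝕂) * t⁻¹ ^ k ≠ 0 :=
    (eventually_ne_cobounded 0).mono fun t ht => mul_ne_zero hfact (pow_ne_zero k (inv_ne_zero ht))
  refine Projectivization.tendsto_mk_of_tendsto_smul hexp hc hk ?_
  simpa only [mul_smul, smul_inv_smul₀ hfact] using
    (tendsto_inv_pow_smul_exp_smul_apply_cobounded N hk1).const_smul (k ! : 𝕂)

end ExpSmulApply

theorem unipotent_projective_limit_general
    {V : Type*} [NormedAddCommGroup V] [NormedSpace ℝ V] [FiniteDimensional ℝ V]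
    (N : V →L[ℝ] V) (x : V) (k : ℕ)
    (hk1 : (N ^ (k + 1)) x = 0) (hk : (N ^ k) x ≠ 0)
    (hexp : ∀ t : ℝ, NormedSpace.exp (t • N) x ≠ 0) :
    (∀ t : ℝ, NormedSpace.exp (t • N) ((N ^ k) x) = (N ^ k) x) ∧
    Tendsto (fun t : ℝ => Projectivization.mk ℝ (NormedSpace.exp (t • N) x) (hexp t))
      atTop (𝓝 (Projectivization.mk ℝ ((N ^ k) x) hk)) ∧
    Tendsto (fun t : ℝ => Projectivization.mk ℝ (NormedSpace.exp (t • N) x) (hexp t))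
      atBot (𝓝 (Projectivization.mk ℝ ((N ^ k) x) hk)) := by
  have hlim := tendsto_mk_exp_smul_apply_cobounded N hk1 hk hexp
  refine ⟨fun t => exp_smul_apply_of_apply_eq_zero N t ?_,
    hlim.mono_left IsOrderBornology.atTop_le_cobounded,
    hlim.mono_left IsOrderBornology.atBot_le_cobounded⟩
  rwa [pow_succ'] at hk1

/-- Let `N` be a nilpotent endomorphism of a finite-dimensional real
vector space, `x ≠ 0`, and `k` the largest integer with `v := N^k x ≠ 0` (so
`N^{k+1} x = 0`).  Then `e^{tN} v = v` for all `t`, and in projective space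
`e^{tN}[x] → [v]` as `t → +∞` and as `t → -∞`. -/
theorem unipotent_projective_limit
    {V : Type*} [NormedAddCommGroup V] [NormedSpace ℝ V] [FiniteDimensional ℝ V]
    (N : V →L[ℝ] V) (hN : IsNilpotent N) (x : V) (hx : x ≠ 0) (k : ℕ)
    (hk1 : (N ^ (k + 1)) x = 0) (hk : (N ^ k) x ≠ 0)
    (hexp : ∀ t : ℝ, NormedSpace.exp (t • N) x ≠ 0) :
    (∀ t : ℝ, NormedSpace.exp (t • N) ((N ^ k) x) = (N ^ k) x) ∧
    Tendsto (fun t : ℝ => Projectivization.mk ℝ (NormedSpace.exp (t • N) x) (hexp t))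
      atTop (𝓝 (Projectivization.mk ℝ ((N ^ k) x) hk)) ∧
    Tendsto (fun t : ℝ => Projectivization.mk ℝ (NormedSpace.exp (t • N) x) (hexp t))
      atBot (𝓝 (Projectivization.mk ℝ ((N ^ k) x) hk)) :=
  unipotent_projective_limit_general N x k hk1 hk hexp
end

section
/- Let g ∈ GL(V) with Jordan decomposition g = e h u, and let V = V_{λ₁} ⊕ ⋯ ⊕ V_{λ_n} be the eigenspace decomposition of the hyperbolic part h with eigenvalues λ₁ > λ₂ > ⋯ > λ_n > 0. For v = v₁ + ⋯ + v_n with v_k ∈ V_{λ_k}, v ≠ 0, let i be the smallest index with v_i ≠ 0. Then every limit point of the sequence g^t[v] in ℙ(V) as t → +∞ lies in ℙ(V_{λ_i}); i.e., the omega-limit set ω([v]) is contained in ℙ(V_{λ_i}). -/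
open Filter Topology LinearAlgebra.Projectivization

/-- The flow induced on projective space by iterating a linear automorphism. -/
def projFlow {K V : Type*} [Field K] [AddCommGroup V] [Module K V]
    (g : V ≃ₗ[K] V) (t : ℤ) : ℙ K V → ℙ K V :=
  Projectivization.map ((g ^ t : V ≃ₗ[K] V) : V →ₗ[K] V) (g ^ t).injective

/-!
Write `g = m h` with `m = e u`. The elliptic part has bounded powers and the unipotent part powers
of polynomial growth, so `m ^ t` and `m ^ (-t)` grow at most polynomially in `t`. Since `m`
commutes with `h`, `g ^ t v_k = λ_k ^ t m ^ t v_k`, so for `k > i` the ratio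
`‖g ^ t v_k‖ / ‖g ^ t v_i‖` is at most a polynomial in `t` times `(λ_k / λ_i) ^ t`, and
`g ^ t v = g ^ t v_i + o(g ^ t v)`. A continuous linear map `f` vanishing exactly on `V_{λ_i}`
is therefore `o(g ^ t v)` along the orbit; as `[w] ↦ ‖f w‖ / ‖w‖` is continuous on `ℙ(V)`,
`f` vanishes at every limit point.
-/

open Asymptotics Finset TensorProduct

theorem exists_norm_one_add_pow_le_of_isNilpotent {A : Type*} [NormedRing A] {N : A}
    (hN : IsNilpotent N) :
    ∃ (C : ℝ) (d : ℕ), 0 ≤ C ∧ ∀ s : ℕ, ‖(1 + N) ^ s‖ ≤ C * ((s : ℝ) + 1) ^ d := by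
  obtain ⟨d, hd⟩ := hN
  refine ⟨∑ j ∈ range d, ‖N ^ j‖, d, by positivity, fun s => ?_⟩
  set F : ℕ → ℝ := fun j => s.choose j * ‖N ^ j‖
  have hF_of_lt : ∀ j, s < j → F j = 0 := fun j hj => by simp [F, Nat.choose_eq_zero_of_lt hj]
  have hF_of_le : ∀ j, d ≤ j → F j = 0 := fun j hj => by simp [F, pow_eq_zero_of_le hj hd]
  have hsum : ∑ j ∈ range (s + 1), F j = ∑ j ∈ range d, F j := by
    rw [sum_subset (range_subset_range.2 (Nat.le_add_right (s + 1) d)),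
      ← sum_subset (range_subset_range.2 (Nat.le_add_left d (s + 1)))]
    · exact fun j _ hj => hF_of_le j (by simpa using hj)
    · exact fun j _ hj => hF_of_lt j (by simpa using hj)
  calc ‖(1 + N) ^ s‖ = ‖∑ j ∈ range (s + 1), s.choose j • N ^ j‖ := by
        rw [add_comm, (Commute.one_right N).add_pow', Nat.sum_antidiagonal_eq_sum_range_succ_mk]
        simp
    _ ≤ ∑ j ∈ range (s + 1), F j := (norm_sum_le _ _).trans (sum_le_sum fun j _ => norm_nsmul_le)
    _ = ∑ j ∈ range d, F j := hsum
    _ ≤ ∑ j ∈ range d, ((s : ℝ) + 1) ^ d * ‖N ^ j‖ := by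
        refine sum_le_sum fun j hj => mul_le_mul_of_nonneg_right ?_ (norm_nonneg _)
        calc (s.choose j : ℝ) ≤ (s : ℝ) ^ j := by exact_mod_cast Nat.choose_le_pow s j
          _ ≤ ((s : ℝ) + 1) ^ j := pow_le_pow_left₀ s.cast_nonneg (by linarith) j
          _ ≤ ((s : ℝ) + 1) ^ d := pow_le_pow_right₀ (by linarith) (mem_range.1 hj).le
    _ = (∑ j ∈ range d, ‖N ^ j‖) * ((s : ℝ) + 1) ^ d := by rw [← mul_sum, mul_comm]

theorem isLittleO_add_one_pow_mul_pow {a b : ℝ} (k : ℕ) (ha : 0 ≤ a) (hab : a < b) :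
    (fun s : ℕ => ((s : ℝ) + 1) ^ k * a ^ s) =o[atTop] (fun s => b ^ s) := by
  have hshift : (fun s : ℕ => ((s : ℝ) + 1) ^ k * a ^ s) =O[atTop]
      (fun s : ℕ => (s : ℝ) ^ k * a ^ s) := by
    refine IsBigO.of_bound (2 ^ k) (eventually_atTop.2 ⟨1, fun s hs => ?_⟩)
    have hs' : (1 : ℝ) ≤ s := by exact_mod_cast hs
    rw [Real.norm_of_nonneg (by positivity), Real.norm_of_nonneg (by positivity), ← mul_assoc,
      ← mul_pow]
    gcongr
    linarith
  exact hshift.trans_isLittleO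
    (isLittleO_pow_const_mul_const_pow_const_pow_of_norm_lt k (by rwa [Real.norm_of_nonneg ha]))

theorem LinearEquiv.pow_apply_of_mem_eigenspace {R M : Type*} [CommRing R] [AddCommGroup M]
    [Module R M] {f : M ≃ₗ[R] M} {μ : R} {y : M}
    (hy : y ∈ Module.End.eigenspace (f : M →ₗ[R] M) μ) (s : ℕ) : (f ^ s) y = μ ^ s • y := by
  rw [Module.End.mem_eigenspace_iff] at hy
  induction s with
  | zero => simp
  | succ s ih =>
    rw [pow_succ', LinearEquiv.mul_apply, ih, map_smul, ← LinearEquiv.coe_coe, hy, smul_smul,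
      pow_succ]

theorem LinearEquiv.zpow_apply_of_mem_eigenspace {R M : Type*} [Field R] [AddCommGroup M]
    [Module R M] {f : M ≃ₗ[R] M} {μ : R} (hμ : μ ≠ 0) {y : M}
    (hy : y ∈ Module.End.eigenspace (f : M →ₗ[R] M) μ) (t : ℤ) : (f ^ t) y = μ ^ t • y := by
  obtain ⟨s, rfl | rfl⟩ := Int.eq_nat_or_neg t
  · simpa using f.pow_apply_of_mem_eigenspace hy s
  · rw [zpow_neg, zpow_natCast, zpow_neg, zpow_natCast]
    apply (f ^ s).injective
    rw [map_smul, f.pow_apply_of_mem_eigenspace hy, smul_smul, inv_mul_cancel₀ (pow_ne_zero s hμ),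
      one_smul]
    exact (f ^ s).apply_symm_apply y

theorem LinearEquiv.pow_apply_mem_eigenspace_of_commute {R M : Type*} [CommRing R]
    [AddCommGroup M] [Module R M] {f h : M ≃ₗ[R] M} (hfh : Commute f h) {μ : R} {y : M}
    (hy : y ∈ Module.End.eigenspace (h : M →ₗ[R] M) μ) (s : ℕ) :
    (f ^ s) y ∈ Module.End.eigenspace (h : M →ₗ[R] M) μ :=
  Module.End.mapsTo_genEigenspace_of_comm
    ((hfh.pow_left s).map LinearEquiv.automorphismGroup.toLinearMapMonoidHom).symm μ 1 hy

theorem LinearEquiv.commute_of_commute_toLinearMap {R M : Type*} [Semiring R] [AddCommMonoid M]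
    [Module R M] {f g : M ≃ₗ[R] M} (hfg : Commute (f : M →ₗ[R] M) (g : M →ₗ[R] M)) :
    Commute f g :=
  LinearEquiv.toLinearMap_injective hfg.eq

theorem LinearEquiv.isNilpotent_inv_sub_one {R M : Type*} [CommRing R] [AddCommGroup M]
    [Module R M] {u : M ≃ₗ[R] M} (hu : IsNilpotent ((u : M →ₗ[R] M) - 1)) :
    IsNilpotent (((u⁻¹ : M ≃ₗ[R] M) : M →ₗ[R] M) - 1) := by
  have hinv : ((u⁻¹ : M ≃ₗ[R] M) : M →ₗ[R] M) * u = 1 := by ext; simp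
  have hinv' : (u : M →ₗ[R] M) * (u⁻¹ : M ≃ₗ[R] M) = 1 := by ext; simp
  have hcomm : Commute ((u⁻¹ : M ≃ₗ[R] M) : M →ₗ[R] M) ((u : M →ₗ[R] M) - 1) :=
    Commute.sub_right (hinv.trans hinv'.symm) (Commute.one_right _)
  rw [show ((u⁻¹ : M ≃ₗ[R] M) : M →ₗ[R] M) - 1 = -(((u⁻¹ : M ≃ₗ[R] M) : M →ₗ[R] M) *
    ((u : M →ₗ[R] M) - 1)) by rw [mul_sub, hinv, mul_one, neg_sub]]
  exact (hcomm.isNilpotent_mul_left hu).neg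

section PolynomialGrowth

variable {𝕜 V : Type*} [NormedField 𝕜]

def HasPolynomialPowGrowth [SeminormedAddCommGroup V] [NormedSpace 𝕜 V] (f : V ≃ₗ[𝕜] V) : Prop :=
  ∃ (C : ℝ) (d : ℕ), 0 ≤ C ∧ ∀ (s : ℕ) (y : V), ‖(f ^ s) y‖ ≤ C * ((s : ℝ) + 1) ^ d * ‖y‖

section Seminormed

variable [SeminormedAddCommGroup V] [NormedSpace 𝕜 V]

theorem hasPolynomialPowGrowth_of_norm_apply_le {f : V ≃ₗ[𝕜] V} {C : ℝ} (hC : 0 ≤ C)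
    (h : ∀ (s : ℕ) (y : V), ‖(f ^ s) y‖ ≤ C * ‖y‖) : HasPolynomialPowGrowth f :=
  ⟨C, 0, hC, fun s y => by simpa using h s y⟩

theorem HasPolynomialPowGrowth.mul {f g : V ≃ₗ[𝕜] V} (hf : HasPolynomialPowGrowth f)
    (hg : HasPolynomialPowGrowth g) (hfg : Commute f g) : HasPolynomialPowGrowth (f * g) := by
  obtain ⟨C₁, d₁, hC₁, hf⟩ := hf
  obtain ⟨C₂, d₂, hC₂, hg⟩ := hg
  refine ⟨C₁ * C₂, d₁ + d₂, by positivity, fun s y => ?_⟩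
  calc ‖((f * g) ^ s) y‖ = ‖(f ^ s) ((g ^ s) y)‖ := by rw [hfg.mul_pow]; rfl
    _ ≤ C₁ * ((s : ℝ) + 1) ^ d₁ * (C₂ * ((s : ℝ) + 1) ^ d₂ * ‖y‖) :=
        (hf s _).trans (mul_le_mul_of_nonneg_left (hg s y) (by positivity))
    _ = C₁ * C₂ * ((s : ℝ) + 1) ^ (d₁ + d₂) * ‖y‖ := by ring

end Seminormed

variable [NormedAddCommGroup V] [NormedSpace 𝕜 V]

theorem HasPolynomialPowGrowth.isLittleO_smul_pow_apply {m : V ≃ₗ[𝕜] V}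
    (hm : HasPolynomialPowGrowth m) (hm' : HasPolynomialPowGrowth m⁻¹) {α β : 𝕜}
    (hαβ : ‖α‖ < ‖β‖) (y : V) {z : V} (hz : z ≠ 0) :
    (fun s : ℕ => α ^ s • (m ^ s) y) =o[atTop] (fun s => β ^ s • (m ^ s) z) := by
  obtain ⟨C, d, hC, hm⟩ := hm
  obtain ⟨C', d', hC', hm'⟩ := hm'
  have hlower : ∀ s : ℕ, ‖z‖ ≤ C' * ((s : ℝ) + 1) ^ d' * ‖(m ^ s) z‖ := fun s => by
    simpa [inv_pow] using hm' s ((m ^ s) z)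
  have hbound : (fun s : ℕ => α ^ s • (m ^ s) y) =O[atTop]
      (fun s : ℕ => (((s : ℝ) + 1) ^ (d + d') * ‖α‖ ^ s) * ‖(m ^ s) z‖) := by
    refine IsBigO.of_bound (C * C' * ‖y‖ / ‖z‖) (Eventually.of_forall fun s => ?_)
    rw [norm_smul, norm_pow, Real.norm_of_nonneg (by positivity), div_mul_eq_mul_div,
      le_div_iff₀ (norm_pos_iff.2 hz)]
    calc ‖α‖ ^ s * ‖(m ^ s) y‖ * ‖z‖
        ≤ ‖α‖ ^ s * (C * ((s : ℝ) + 1) ^ d * ‖y‖) * (C' * ((s : ℝ) + 1) ^ d' * ‖(m ^ s) z‖) := by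
          gcongr
          · exact hm s y
          · exact hlower s
      _ = _ := by ring
  refine hbound.trans_isLittleO ((isLittleO_add_one_pow_mul_pow _ (norm_nonneg α) hαβ).mul_isBigO
    (isBigO_refl (fun s : ℕ => ‖(m ^ s) z‖) atTop) |>.trans_isBigO ?_)
  exact IsBigO.of_bound 1 (Eventually.of_forall fun s => by simp [norm_smul])

theorem HasPolynomialPowGrowth.isLittleO_mul_pow_apply_of_mem_eigenspace {m h : V ≃ₗ[𝕜] V}
    (hm : HasPolynomialPowGrowth m) (hm' : HasPolynomialPowGrowth m⁻¹) (hmh : Commute m h)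
    {a b : 𝕜} (hab : ‖a‖ < ‖b‖) {y z : V} (hy : y ∈ Module.End.eigenspace (h : V →ₗ[𝕜] V) a)
    (hz : z ∈ Module.End.eigenspace (h : V →ₗ[𝕜] V) b) (hz0 : z ≠ 0) :
    (fun s : ℕ => ((m * h) ^ s) y) =o[atTop] (fun s => ((m * h) ^ s) z) := by
  simp only [hmh.mul_pow, LinearEquiv.mul_apply, h.pow_apply_of_mem_eigenspace hy,
    h.pow_apply_of_mem_eigenspace hz, map_smul]
  exact hm.isLittleO_smul_pow_apply hm' hab y hz0

end PolynomialGrowth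

section FiniteDimensional

variable {𝕜 V : Type*} [NontriviallyNormedField 𝕜] [CompleteSpace 𝕜] [NormedAddCommGroup V]
  [NormedSpace 𝕜 V] [FiniteDimensional 𝕜 V]

theorem hasPolynomialPowGrowth_of_isNilpotent_sub_one {u : V ≃ₗ[𝕜] V}
    (hu : IsNilpotent ((u : V →ₗ[𝕜] V) - 1)) : HasPolynomialPowGrowth u := by
  set T := Module.End.toContinuousLinearMap (𝕜 := 𝕜) V
  obtain ⟨C, d, hC, hbound⟩ := exists_norm_one_add_pow_le_of_isNilpotent (hu.map T)
  refine ⟨C, d, hC, fun s y => ?_⟩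
  have hpow : (u ^ s) y = ((1 + T ((u : V →ₗ[𝕜] V) - 1)) ^ s) y := by
    rw [← map_one T, ← map_add, add_sub_cancel, ← map_pow]
    exact (LinearEquiv.pow_apply u s y).trans (Module.End.pow_apply _ s y).symm
  rw [hpow]
  exact (ContinuousLinearMap.le_opNorm _ y).trans
    (mul_le_mul_of_nonneg_right (hbound s) (norm_nonneg y))

theorem Submodule.exists_continuousLinearMap_apply_eq_zero_iff (W : Submodule 𝕜 V) :
    ∃ f : V →L[𝕜] V, ∀ x, f x = 0 ↔ x ∈ W := by
  obtain ⟨U, hU⟩ := W.exists_isCompl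
  exact ⟨LinearMap.toContinuousLinearMap (U.projection W hU.symm),
    fun x => U.projection_apply_eq_zero_iff hU.symm⟩

end FiniteDimensional

section Semisimple

variable {V : Type*} [NormedAddCommGroup V] [NormedSpace ℝ V] [FiniteDimensional ℝ V]

theorem exists_forall_norm_zpow_apply_le_of_isSemisimple (e : V ≃ₗ[ℝ] V)
    (hss : Module.End.IsSemisimple (LinearMap.baseChange ℂ (e : V →ₗ[ℝ] V)))
    (hsp : ∀ μ ∈ spectrum ℂ (LinearMap.baseChange ℂ (e : V →ₗ[ℝ] V)), ‖μ‖ = 1) (y : V) :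
    ∃ C, ∀ t : ℤ, ‖(e ^ t) y‖ ≤ C := by
  set E := LinearMap.baseChange ℂ (e : V →ₗ[ℝ] V)
  have hy : (1 : ℂ) ⊗ₜ[ℝ] y ∈ ⨆ μ, Module.End.eigenspace E μ :=
    hss.iSup_eigenspace_eq_top ▸ Submodule.mem_top
  obtain ⟨c, hc, hcy⟩ := (Submodule.mem_iSup_iff_exists_finsupp _ _).1 hy
  have hnorm : ∀ μ ∈ c.support, ‖μ‖ = 1 := fun μ hμ => hsp μ <|
    Module.End.hasEigenvalue_iff_mem_spectrum.1 <|
      Module.End.hasEigenvalue_of_hasEigenvector ⟨hc μ, Finsupp.mem_support_iff.1 hμ⟩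
  -- `e ^ t y` is the real part of `∑ μ ^ t • c μ`, the image under a fixed linear map `Φ` of the
  -- vector `(μ ^ t)_μ`, whose sup norm is `1`.
  let re : ℂ ⊗[ℝ] V →ₗ[ℝ] V := (TensorProduct.lid ℝ V).toLinearMap ∘ₗ Complex.reLm.rTensor V
  let Φ : (c.support → ℂ) →ₗ[ℝ] V :=
    re ∘ₗ (Fintype.linearCombination ℂ (fun μ : c.support => c μ)).restrictScalars ℝ
  refine ⟨‖LinearMap.toContinuousLinearMap Φ‖, fun t => ?_⟩
  have heig : ∀ μ ∈ c.support, (e.baseChange ℝ ℂ V V ^ t) (c μ) = μ ^ t • c μ := fun μ hμ =>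
    LinearEquiv.zpow_apply_of_mem_eigenspace (norm_ne_zero_iff.1 (by simp [hnorm μ hμ]))
      (by rw [LinearEquiv.coe_baseChange]; exact hc μ) t
  have hΦ : (e ^ t) y = Φ (fun μ => (μ : ℂ) ^ t) := calc
    (e ^ t) y = re ((1 : ℂ) ⊗ₜ (e ^ t) y) := by simp [re]
    _ = re ((e.baseChange ℝ ℂ V V ^ t) ((1 : ℂ) ⊗ₜ y)) := by
      rw [← LinearEquiv.baseChange_zpow, LinearEquiv.baseChange_tmul]
    _ = re (∑ μ ∈ c.support, μ ^ t • c μ) := by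
      rw [← hcy, Finsupp.sum, map_sum, sum_congr rfl heig]
    _ = Φ (fun μ => (μ : ℂ) ^ t) := by
      simp [Φ, Fintype.linearCombination_apply, ← Finset.sum_coe_sort c.support]
  rw [hΦ]
  refine ((LinearMap.toContinuousLinearMap Φ).le_opNorm _).trans
    (mul_le_of_le_one_right (norm_nonneg _) ?_)
  refine (pi_norm_le_iff_of_nonneg zero_le_one).2 fun μ => ?_
  rw [norm_zpow, hnorm μ μ.2, one_zpow]

theorem hasPolynomialPowGrowth_and_inv_of_isSemisimple (e : V ≃ₗ[ℝ] V)
    (hss : Module.End.IsSemisimple (LinearMap.baseChange ℂ (e : V →ₗ[ℝ] V)))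
    (hsp : ∀ μ ∈ spectrum ℂ (LinearMap.baseChange ℂ (e : V →ₗ[ℝ] V)), ‖μ‖ = 1) :
    HasPolynomialPowGrowth e ∧ HasPolynomialPowGrowth e⁻¹ := by
  obtain ⟨C, hC⟩ := banach_steinhaus (g := fun t : ℤ =>
    LinearMap.toContinuousLinearMap ((e ^ t : V ≃ₗ[ℝ] V) : V →ₗ[ℝ] V))
    (exists_forall_norm_zpow_apply_le_of_isSemisimple e hss hsp)
  have hbound : ∀ (t : ℤ) (y : V), ‖(e ^ t) y‖ ≤ C * ‖y‖ := fun t y =>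
    (ContinuousLinearMap.le_opNorm _ y).trans (mul_le_mul_of_nonneg_right (hC t) (norm_nonneg y))
  have hC0 : 0 ≤ C := (norm_nonneg _).trans (hC 0)
  exact ⟨hasPolynomialPowGrowth_of_norm_apply_le hC0 fun s y => by simpa using hbound s y,
    hasPolynomialPowGrowth_of_norm_apply_le hC0 fun s y => by simpa using hbound (-s) y⟩

end Semisimple

theorem projFlow_mk {K V : Type*} [Field K] [AddCommGroup V] [Module K V] (g : V ≃ₗ[K] V)
    (t : ℤ) {w : V} (hw : w ≠ 0) :
    projFlow g t (Projectivization.mk K w hw) =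
      Projectivization.mk K ((g ^ t) w) ((g ^ t).map_ne_zero_iff.2 hw) :=
  Projectivization.map_mk _ _ _ _

theorem isLittleO_apply_add_of_isLittleO {𝕜 V F ι : Type*} [NontriviallyNormedField 𝕜]
    [SeminormedAddCommGroup V] [NormedSpace 𝕜 V] [SeminormedAddCommGroup F] [NormedSpace 𝕜 F]
    (f : V →L[𝕜] F) {l : Filter ι} {a b : ι → V} (hba : b =o[l] a) (ha : ∀ j, f (a j) = 0) :
    (fun j => f (a j + b j)) =o[l] (fun j => a j + b j) := by
  simp only [map_add, ha, zero_add]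
  exact (f.isBigO_comp b l).trans_isLittleO
    (hba.trans_isBigO (by simpa only [add_comm] using hba.right_isBigO_add))

section Projective

variable {𝕜 V F : Type*} [NormedField 𝕜] [NormedAddCommGroup V] [NormedSpace 𝕜 V]
  [NormedAddCommGroup F] [NormedSpace 𝕜 F]

theorem exists_continuous_mk_eq_norm_apply_div_norm (f : V →L[𝕜] F) :
    ∃ q : ℙ 𝕜 V → ℝ, Continuous q ∧
      ∀ (w : V) (hw : w ≠ 0), q (Projectivization.mk 𝕜 w hw) = ‖f w‖ / ‖w‖ := by
  refine ⟨Quotient.lift (fun w : {w : V // w ≠ 0} => ‖f w‖ / ‖(w : V)‖) ?_, ?_, fun _ _ => rfl⟩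
  · rintro ⟨a, ha⟩ ⟨b, hb⟩ ⟨c, rfl⟩
    simp [Units.smul_def, norm_smul, mul_div_mul_left]
  · exact Continuous.quotient_lift
      ((by fun_prop : Continuous fun w : {w : V // w ≠ 0} => ‖f w‖).div (by fun_prop)
        fun w => norm_ne_zero_iff.2 w.2) _

theorem eq_zero_of_tendsto_mk_of_isLittleO (f : V →L[𝕜] F) {ι : Type*} {l : Filter ι} [l.NeBot]
    {w : ι → V} (hw : ∀ j, w j ≠ 0) {x : V} (hx : x ≠ 0)
    (hlim : Tendsto (fun j => Projectivization.mk 𝕜 (w j) (hw j)) l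
      (𝓝 (Projectivization.mk 𝕜 x hx)))
    (ho : (fun j => f (w j)) =o[l] w) : f x = 0 := by
  obtain ⟨q, hq, hqmk⟩ := exists_continuous_mk_eq_norm_apply_div_norm f
  have hratio : Tendsto (fun j => ‖f (w j)‖ / ‖w j‖) l (𝓝 0) :=
    ho.norm_norm.tendsto_div_nhds_zero
  have hqx : ‖f x‖ / ‖x‖ = 0 := by
    rw [← hqmk x hx]
    exact tendsto_nhds_unique ((hq.tendsto _).comp hlim)
      (by simpa only [Function.comp_def, hqmk] using hratio)
  simpa [hx] using hqx

theorem apply_eq_zero_of_tendsto_projFlow (f : V →L[𝕜] F) (g : V ≃ₗ[𝕜] V) {w : V} (hw : w ≠ 0)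
    (ho : (fun s : ℕ => f ((g ^ s) w)) =o[atTop] (fun s : ℕ => (g ^ s) w))
    {ts : ℕ → ℤ} (hts : Tendsto ts atTop atTop) {x : V} (hx : x ≠ 0)
    (hlim : Tendsto (fun j => projFlow g (ts j) (Projectivization.mk 𝕜 w hw)) atTop
      (𝓝 (Projectivization.mk 𝕜 x hx))) : f x = 0 := by
  have htoNat : Tendsto (fun j => (ts j).toNat) atTop atTop :=
    (tendsto_atTop_atTop.2 fun b => ⟨(b : ℤ), fun t ht => by omega⟩ :
      Tendsto Int.toNat atTop atTop).comp hts
  have hpow : ∀ᶠ j in atTop, g ^ ts j = g ^ (ts j).toNat :=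
    (hts.eventually_ge_atTop 0).mono fun j hj => by rw [← zpow_natCast, Int.toNat_of_nonneg hj]
  refine eq_zero_of_tendsto_mk_of_isLittleO f (fun j => (g ^ ts j).map_ne_zero_iff.2 hw) hx
    (by simpa only [projFlow_mk] using hlim) ?_
  exact (ho.comp_tendsto htoNat).congr' (hpow.mono fun j hj => by simp [hj])
    (hpow.mono fun j hj => by simp [hj])

end Projective

theorem omega_limit_in_top_eigenspace_general
    {V : Type*} [NormedAddCommGroup V] [NormedSpace ℝ V] [FiniteDimensional ℝ V]
    (g e h u : V ≃ₗ[ℝ] V) (hg : g = e * h * u)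
    (heh : Commute (e : V →ₗ[ℝ] V) (h : V →ₗ[ℝ] V))
    (heu : Commute (e : V →ₗ[ℝ] V) (u : V →ₗ[ℝ] V))
    (hhu : Commute (h : V →ₗ[ℝ] V) (u : V →ₗ[ℝ] V))
    (he : Module.End.IsSemisimple (LinearMap.baseChange ℂ (e : V →ₗ[ℝ] V)) ∧
      ∀ μ ∈ spectrum ℂ (LinearMap.baseChange ℂ (e : V →ₗ[ℝ] V)), ‖μ‖ = 1)
    (hu : IsNilpotent ((u : V →ₗ[ℝ] V) - 1))
    (n : ℕ) (l : Fin n → ℝ) (hl : StrictAnti l) (hlpos : ∀ k, 0 < l k)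
    (v : Fin n → V) (hv : ∀ k, v k ∈ Module.End.eigenspace (h : V →ₗ[ℝ] V) (l k))
    (hsum : ∑ k, v k ≠ 0) (i : Fin n) (hvi : v i ≠ 0) (hmin : ∀ k < i, v k = 0) :
    ∀ ts : ℕ → ℤ, Tendsto ts atTop atTop →
      ∀ (x : V) (hx : x ≠ 0),
        Tendsto (fun j => projFlow g (ts j) (Projectivization.mk ℝ (∑ k, v k) hsum))
          atTop (𝓝 (Projectivization.mk ℝ x hx)) →
        x ∈ Module.End.eigenspace (h : V →ₗ[ℝ] V) (l i) := by
  intro ts hts x hx hlim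
  have ceu := LinearEquiv.commute_of_commute_toLinearMap heu
  have chu := LinearEquiv.commute_of_commute_toLinearMap hhu
  have hmh : Commute (e * u) h :=
    (LinearEquiv.commute_of_commute_toLinearMap heh).mul_left chu.symm
  have hgm : g = e * u * h := by rw [hg, mul_assoc, chu.eq, ← mul_assoc]
  obtain ⟨he₁, he₂⟩ := hasPolynomialPowGrowth_and_inv_of_isSemisimple e he.1 he.2
  have hm := he₁.mul (hasPolynomialPowGrowth_of_isNilpotent_sub_one hu) ceu
  have hm' : HasPolynomialPowGrowth (e * u)⁻¹ := mul_inv_rev e u ▸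
    (hasPolynomialPowGrowth_of_isNilpotent_sub_one (LinearEquiv.isNilpotent_inv_sub_one hu)).mul
      he₂ ceu.inv_inv.symm
  have hdom : ∀ k ∈ univ.erase i,
      (fun s : ℕ => (g ^ s) (v k)) =o[atTop] fun s => (g ^ s) (v i) := by
    intro k hk
    by_cases hvk : v k = 0
    · simp [hvk]
    have hik : i < k := lt_of_le_of_ne (not_lt.1 (mt (hmin k) hvk)) (ne_of_mem_erase hk).symm
    rw [hgm]
    exact hm.isLittleO_mul_pow_apply_of_mem_eigenspace hm' hmh
      (by simpa [abs_of_pos (hlpos k), abs_of_pos (hlpos i)] using hl hik) (hv k) (hv i) hvi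
  obtain ⟨f, hf⟩ :=
    (Module.End.eigenspace (h : V →ₗ[ℝ] V) (l i)).exists_continuousLinearMap_apply_eq_zero_iff
  have hfi : ∀ s : ℕ, f ((g ^ s) (v i)) = 0 := fun s => (hf _).2 <|
    LinearEquiv.pow_apply_mem_eigenspace_of_commute (hgm ▸ hmh.mul_left (.refl h)) (hv i) s
  refine (hf x).1 (apply_eq_zero_of_tendsto_projFlow f g hsum ?_ hts hx hlim)
  rw [← add_sum_erase _ _ (mem_univ i)]
  simpa only [map_add, map_sum] using
    isLittleO_apply_add_of_isLittleO f (IsLittleO.fun_sum hdom) hfi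

/-- Let `g = e h u` be the multiplicative Jordan decomposition of
`g ∈ GL(V)`, and `V = V_{λ₁} ⊕ ⋯ ⊕ V_{λ_n}` the eigenspace decomposition of the hyperbolic
part `h`, with `λ₁ > ⋯ > λ_n > 0`.  Write `v = v₁ + ⋯ + v_n` with `v_k ∈ V_{λ_k}`, `v ≠ 0`,
and let `i` be the smallest index with `v_i ≠ 0`.  Then every limit of a subsequence
`g^{t_j}[v]` in `ℙ(V)` with `t_j → ∞` lies in `ℙ(V_{λ_i})`; i.e. `ω([v]) ⊆ ℙ(V_{λ_i})`. -/
theorem omega_limit_in_top_eigenspace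
    {V : Type*} [NormedAddCommGroup V] [NormedSpace ℝ V] [FiniteDimensional ℝ V]
    (g e h u : V ≃ₗ[ℝ] V) (hg : g = e * h * u)
    (heh : Commute (e : V →ₗ[ℝ] V) (h : V →ₗ[ℝ] V))
    (heu : Commute (e : V →ₗ[ℝ] V) (u : V →ₗ[ℝ] V))
    (hhu : Commute (h : V →ₗ[ℝ] V) (u : V →ₗ[ℝ] V))
    (he : Module.End.IsSemisimple (LinearMap.baseChange ℂ (e : V →ₗ[ℝ] V)) ∧
      ∀ μ ∈ spectrum ℂ (LinearMap.baseChange ℂ (e : V →ₗ[ℝ] V)), ‖μ‖ = 1)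
    (hu : IsNilpotent ((u : V →ₗ[ℝ] V) - 1))
    (n : ℕ) (l : Fin n → ℝ) (hl : StrictAnti l) (hlpos : ∀ k, 0 < l k)
    (hdiag : ⨆ k : Fin n, Module.End.eigenspace (h : V →ₗ[ℝ] V) (l k) = ⊤)
    (v : Fin n → V) (hv : ∀ k, v k ∈ Module.End.eigenspace (h : V →ₗ[ℝ] V) (l k))
    (hsum : ∑ k, v k ≠ 0) (i : Fin n) (hvi : v i ≠ 0) (hmin : ∀ k < i, v k = 0) :
    ∀ ts : ℕ → ℤ, Tendsto ts atTop atTop →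
      ∀ (x : V) (hx : x ≠ 0),
        Tendsto (fun j => projFlow g (ts j) (Projectivization.mk ℝ (∑ k, v k) hsum))
          atTop (𝓝 (Projectivization.mk ℝ x hx)) →
        x ∈ Module.End.eigenspace (h : V →ₗ[ℝ] V) (l i) :=
  omega_limit_in_top_eigenspace_general g e h u hg heh heu hhu he hu n l hl hlpos v hv hsum i hvi
    hmin
end
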